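/- Let i be a new node of R_q(G) with neighbors s and t (where st is an edge of G), and let j be an old node of G. Then the resistance distance in R_q(G) satisfies r̃_{ij} = 1/2 + (2r_{sj} + 2r_{tj} - r_{st})/(2(q+2)), where r denotes resistance distance in G. -/

import Mathlib

open scoped Classical

/-- The `q`-triangulation graph `R_q(G)`: for each edge `e` of `G` we add `q` new
nodes (indexed by `G.edgeSet × Fin q`), each adjacent exactly to the two endpoints of `e`. -/
noncomputable def qTriangulation {V : Type} (G : SimpleGraph V) (q : ℕ) :
    SimpleGraph (V ⊕ (G.edgeSet × Fin q)) where
  Adj x y :=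
    match x, y with
    | Sum.inl a, Sum.inl b => G.Adj a b
    | Sum.inl a, Sum.inr p => a ∈ (p.1 : Sym2 V)
    | Sum.inr p, Sum.inl b => b ∈ (p.1 : Sym2 V)
    | Sum.inr _, Sum.inr _ => False
  symm := by
    refine ⟨?_⟩
    rintro (a | p) (b | p') h
    · exact h.symm
    · exact h
    · exact h
    · exact h.elim
  loopless := by
    refine ⟨?_⟩
    rintro (a | p) h
    · exact G.loopless.irrefl a h
    · exact h

/-- The Laplacian of a finite simple graph over `ℝ` is Hermitian. -/
lemma lap_isHermitian {V : Type} [Fintype V] (G : SimpleGraph V) :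
    (G.lapMatrix ℝ).IsHermitian := by
  have h := G.isSymm_lapMatrix (R := ℝ)
  show Matrix.conjTranspose (G.lapMatrix ℝ) = G.lapMatrix ℝ
  rw [Matrix.conjTranspose_eq_transpose_of_trivial]
  exact h

/-- The Moore–Penrose pseudoinverse `L⁺` of the graph Laplacian, obtained from the spectral
theorem by inverting the nonzero eigenvalues (in `ℝ`, `0⁻¹ = 0`). -/
noncomputable def lapPinv {V : Type} [Fintype V] [DecidableEq V] (G : SimpleGraph V) :
    Matrix V V ℝ :=
  ((lap_isHermitian G).eigenvectorUnitary : Matrix V V ℝ) *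
    Matrix.diagonal (fun i => ((lap_isHermitian G).eigenvalues i)⁻¹) *
    (star ((lap_isHermitian G).eigenvectorUnitary : Matrix V V ℝ))

/-- Resistance distance `r_{ij} = (e_i - e_j)ᵀ L⁺ (e_i - e_j)`. -/
noncomputable def resistance {V : Type} [Fintype V] [DecidableEq V] (G : SimpleGraph V)
    (i j : V) : ℝ :=
  dotProduct ((Pi.single i 1 - Pi.single j 1 : V → ℝ))
    (Matrix.mulVec (lapPinv G) (Pi.single i 1 - Pi.single j 1 : V → ℝ))

open Matrix

section spec
variable {V : Type} [Fintype V] [DecidableEq V] (G : SimpleGraph V)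

lemma lapPinv_transpose : (lapPinv G)ᵀ = lapPinv G := by
  set U := ((lap_isHermitian G).eigenvectorUnitary : Matrix V V ℝ)
  have hsU : star U = Uᵀ := rfl
  simp [lapPinv, Matrix.transpose_mul, hsU, Matrix.mul_assoc]
  simp [Matrix.star_eq_conjTranspose, Matrix.conjTranspose_eq_transpose_of_trivial]

lemma lap_spec : G.lapMatrix ℝ =
    ((lap_isHermitian G).eigenvectorUnitary : Matrix V V ℝ) *
      Matrix.diagonal ((lap_isHermitian G).eigenvalues) *
      (star ((lap_isHermitian G).eigenvectorUnitary : Matrix V V ℝ)) := by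
  have h := (lap_isHermitian G).spectral_theorem
  have e1 : Matrix.diagonal (RCLike.ofReal ∘ (lap_isHermitian G).eigenvalues) =
      Matrix.diagonal ((lap_isHermitian G).eigenvalues) := by
    ext i j
    rcases eq_or_ne i j with rfl | hij
    · rw [Matrix.diagonal_apply_eq, Matrix.diagonal_apply_eq]; rfl
    · rw [Matrix.diagonal_apply_ne _ hij, Matrix.diagonal_apply_ne _ hij]
  rw [e1] at h
  convert h using 2
  rfl

lemma lap_mul_lapPinv_mul_lap : G.lapMatrix ℝ * lapPinv G * G.lapMatrix ℝ = G.lapMatrix ℝ := by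
  set U := ((lap_isHermitian G).eigenvectorUnitary : Matrix V V ℝ) with hU
  have hstar : star U * U = 1 := Unitary.coe_star_mul_self _
  have hc : ∀ (u : unitaryGroup V ℝ) (X : Matrix V V ℝ), star (u : Matrix V V ℝ) * ((u : Matrix V V ℝ) * X) = X := fun u X => by
    rw [← Matrix.mul_assoc, Unitary.coe_star_mul_self, Matrix.one_mul]
  rw [lap_spec G, lapPinv]
  simp only [Matrix.mul_assoc, hc]
  congr 1
  rw [← Matrix.mul_assoc, ← Matrix.mul_assoc, Matrix.diagonal_mul_diagonal,
    Matrix.diagonal_mul_diagonal]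
  congr 2
  ext i
  rcases eq_or_ne ((lap_isHermitian G).eigenvalues i) 0 with h | h
  · simp [h]
  · field_simp

lemma lap_mul_lap_mul_lapPinv : G.lapMatrix ℝ * G.lapMatrix ℝ * lapPinv G = G.lapMatrix ℝ := by
  set U := ((lap_isHermitian G).eigenvectorUnitary : Matrix V V ℝ) with hU
  have hstar : star U * U = 1 := Unitary.coe_star_mul_self _
  have hc : ∀ (u : unitaryGroup V ℝ) (X : Matrix V V ℝ), star (u : Matrix V V ℝ) * ((u : Matrix V V ℝ) * X) = X := fun u X => by
    rw [← Matrix.mul_assoc, Unitary.coe_star_mul_self, Matrix.one_mul]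
  rw [lap_spec G, lapPinv]
  simp only [Matrix.mul_assoc, hc]
  congr 1
  rw [← Matrix.mul_assoc, ← Matrix.mul_assoc, Matrix.diagonal_mul_diagonal,
    Matrix.diagonal_mul_diagonal]
  congr 2
  ext i
  rcases eq_or_ne ((lap_isHermitian G).eigenvalues i) 0 with h | h
  · simp [h]
  · field_simp

end spec

section pot
variable {V : Type} [Fintype V] [DecidableEq V] (G : SimpleGraph V)

lemma sum_lap_mulVec (y : V → ℝ) : ∑ v, (G.lapMatrix ℝ *ᵥ y) v = 0 := by
  have hsym : ∀ a b : V, G.lapMatrix ℝ a b = G.lapMatrix ℝ b a := by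
    intro a b
    have := congrFun (congrFun (G.isSymm_lapMatrix (R := ℝ)) b) a
    simpa [Matrix.transpose_apply] using this
  have hrow : ∀ a : V, ∑ b, G.lapMatrix ℝ a b = 0 := by
    intro a
    have := congrFun (SimpleGraph.lapMatrix_mulVec_const_eq_zero (R := ℝ) G) a
    simpa [Matrix.mulVec, dotProduct] using this
  simp only [Matrix.mulVec, dotProduct]
  rw [Finset.sum_comm]
  refine Finset.sum_eq_zero fun b _ => ?_
  rw [← Finset.sum_mul, Finset.sum_congr rfl fun a _ => hsym a b, hrow b, zero_mul]

lemma ker_lap_constant (hG : G.Connected) (y : V → ℝ) (hy : G.lapMatrix ℝ *ᵥ y = 0)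
    (a b : V) : y a = y b := by
  have h := (G.lapMatrix_mulVec_eq_zero_iff_forall_reachable (x := y)).mp hy
  exact h a b (hG.preconnected a b)

/-- If `L x = e_i - e_j` then the resistance equals `x i - x j`. -/
lemma resistance_eq_of_potential (hG : G.Connected) (i j : V) (x : V → ℝ)
    (hx : G.lapMatrix ℝ *ᵥ x = Pi.single i 1 - Pi.single j 1) :
    resistance G i j = x i - x j := by
  set d : V → ℝ := Pi.single i 1 - Pi.single j 1 with hd
  set z : V → ℝ := lapPinv G *ᵥ d - x with hz
  have hLz : G.lapMatrix ℝ *ᵥ z = 0 := by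
    have h1 : G.lapMatrix ℝ *ᵥ (lapPinv G *ᵥ d) = G.lapMatrix ℝ *ᵥ x := by
      rw [← hx, Matrix.mulVec_mulVec, Matrix.mulVec_mulVec, lap_mul_lapPinv_mul_lap]
    rw [hz, Matrix.mulVec_sub, h1, sub_self]
  have hzc : ∀ a b : V, z a = z b := ker_lap_constant G hG z hLz
  have hdz : d ⬝ᵥ z = 0 := by
    have hsum : ∑ v, d v = 0 := by
      rw [← hx]; exact sum_lap_mulVec G x
    have : ∀ v, z v = z i := fun v => hzc v i
    calc d ⬝ᵥ z = ∑ v, d v * z i := Finset.sum_congr rfl fun v _ => by rw [this v]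
    _ = (∑ v, d v) * z i := by rw [Finset.sum_mul]
    _ = 0 := by rw [hsum, zero_mul]
  have : resistance G i j = d ⬝ᵥ (x + z) := by
    rw [resistance, hz]; congr 1; simp [hd]
  rw [this, dotProduct_add, hdz, add_zero]
  have hij : d ⬝ᵥ x = x i - x j := by
    simp [hd, sub_dotProduct, single_dotProduct]
  rw [hij]

/-- `L L⁺ d = d` for `d` of zero sum, `G` connected. -/
lemma lap_mulVec_lapPinv_mulVec (hG : G.Connected) (d : V → ℝ) (hd : ∑ v, d v = 0) :
    G.lapMatrix ℝ *ᵥ (lapPinv G *ᵥ d) = d := by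
  set z : V → ℝ := G.lapMatrix ℝ *ᵥ (lapPinv G *ᵥ d) - d with hz
  have hLz : G.lapMatrix ℝ *ᵥ z = 0 := by
    rw [hz, Matrix.mulVec_sub, Matrix.mulVec_mulVec, Matrix.mulVec_mulVec,
      lap_mul_lap_mul_lapPinv, sub_self]
  have hzc := ker_lap_constant G hG z hLz
  have hzsum : ∑ v, z v = 0 := by
    rw [hz]
    simp only [Pi.sub_apply, Finset.sum_sub_distrib, hd, sub_zero]
    exact sum_lap_mulVec G _
  have hne : Nonempty V := hG.nonempty
  obtain ⟨v0⟩ := hne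
  have hzv : ∀ v, z v = z v0 := fun v => hzc v v0
  have : (Fintype.card V : ℝ) * z v0 = 0 := by
    rw [← hzsum, Finset.sum_congr rfl fun v _ => hzv v, Finset.sum_const, nsmul_eq_mul,
      Finset.card_univ]
  have hz0 : z v0 = 0 := by
    have hcard : (0:ℝ) < Fintype.card V := by
      exact_mod_cast Fintype.card_pos_iff.mpr ⟨v0⟩
    exact (mul_eq_zero.mp this).resolve_left (ne_of_gt hcard)
  have : z = 0 := funext fun v => by rw [hzv v, hz0]; rfl
  have := congrArg (· + d) this
  simpa [hz, sub_add_cancel] using this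

end pot

section edgesum
variable {V : Type} [Fintype V] [DecidableEq V] (G : SimpleGraph V)

lemma sum_edges_mem (v : V) (g : Sym2 V → ℝ) :
    ∑ e' : G.edgeSet, (if v ∈ (e' : Sym2 V) then g e' else 0)
      = ∑ a : V, if G.Adj v a then g s(v, a) else 0 := by
  classical
  have h1 : ∑ e' : G.edgeSet, (if v ∈ (e' : Sym2 V) then g e' else 0)
      = ∑ z ∈ G.edgeFinset, (if v ∈ z then g z else 0) := by
    rw [Finset.sum_subtype G.edgeFinset (fun z => G.mem_edgeFinset)]
  have h2 : ∑ z ∈ G.edgeFinset, (if v ∈ z then g z else 0)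
      = ∑ z ∈ G.incidenceFinset v, g z := by
    rw [G.incidenceFinset_eq_filter, Finset.sum_filter]
  have h3 : ∑ z ∈ G.incidenceFinset v, g z = ∑ z : G.incidenceSet v, g z := by
    rw [Finset.sum_subtype (G.incidenceFinset v) (fun z => G.mem_incidenceFinset (v := v) z)]
  have h4 : ∑ z : G.incidenceSet v, g z = ∑ w : G.neighborSet v, g s(v, w) := by
    refine (Fintype.sum_equiv (G.incidenceSetEquivNeighborSet v).symm _ _ fun w => ?_).symm
    simp [SimpleGraph.incidenceSetEquivNeighborSet]
  have h5 : ∑ w : G.neighborSet v, g s(v, w) = ∑ a : V, if G.Adj v a then g s(v, a) else 0 := by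
    rw [← Finset.sum_filter]
    exact (Finset.sum_subtype (p := (· ∈ G.neighborSet v))
      (Finset.univ.filter (fun a => G.Adj v a))
      (fun a => by simp [SimpleGraph.mem_neighborSet]) (fun a => g s(v, a))).symm
  rw [h1, h2, h3, h4, h5]

lemma lap_mulVec_ite (H : SimpleGraph V) (f : V → ℝ) (w : V) :
    (H.lapMatrix ℝ *ᵥ f) w = ∑ y, if H.Adj w y then f w - f y else 0 := by
  classical
  rw [SimpleGraph.lapMatrix_mulVec_apply, H.degree_eq_sum_if_adj (R := ℝ),
    SimpleGraph.neighborFinset_eq_filter, Finset.sum_filter, Finset.sum_mul]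
  rw [← Finset.sum_sub_distrib]
  refine Finset.sum_congr rfl fun y _ => ?_
  split_ifs <;> simp

end edgesum

section qtri
variable {V : Type} (G : SimpleGraph V) (q : ℕ)

lemma qTri_adj_inl_inl (a b : V) :
    (qTriangulation G q).Adj (Sum.inl a) (Sum.inl b) ↔ G.Adj a b := Iff.rfl

lemma qTri_adj_inl_inr (a : V) (p : G.edgeSet × Fin q) :
    (qTriangulation G q).Adj (Sum.inl a) (Sum.inr p) ↔ a ∈ (p.1 : Sym2 V) := Iff.rfl

lemma qTri_adj_inr_inl (a : V) (p : G.edgeSet × Fin q) :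
    (qTriangulation G q).Adj (Sum.inr p) (Sum.inl a) ↔ a ∈ (p.1 : Sym2 V) := Iff.rfl

lemma qTri_adj_inr_inr (p p' : G.edgeSet × Fin q) :
    ¬ (qTriangulation G q).Adj (Sum.inr p) (Sum.inr p') := fun h => h

lemma qTri_connected (hG : G.Connected) : (qTriangulation G q).Connected := by
  have hinl : ∀ u v : V, (qTriangulation G q).Reachable (Sum.inl u) (Sum.inl v) := by
    intro u v
    exact (hG.preconnected u v).map (⟨Sum.inl, fun h => h⟩ : G →g qTriangulation G q)
  have key : ∀ w : V ⊕ (G.edgeSet × Fin q), ∃ v : V,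
      (qTriangulation G q).Reachable w (Sum.inl v) := by
    rintro (v | p)
    · exact ⟨v, SimpleGraph.Reachable.refl _⟩
    · refine ⟨(p.1 : Sym2 V).out.1, SimpleGraph.Adj.reachable ?_⟩
      rw [qTri_adj_inr_inl]
      exact Sym2.out_fst_mem _
  rw [SimpleGraph.connected_iff]
  refine ⟨?_, ⟨Sum.inl hG.nonempty.some⟩⟩
  intro w w'
  obtain ⟨v, hv⟩ := key w
  obtain ⟨v', hv'⟩ := key w'
  exact hv.trans ((hinl v v').trans hv'.symm)

end qtri


lemma sum_ite_or {V : Type} [Fintype V] [DecidableEq V] {a b : V} (hab : a ≠ b) (g : V → ℝ) :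
    ∑ v : V, (if v = a ∨ v = b then g v else 0) = g a + g b := by
  have h : ∀ v : V, (if v = a ∨ v = b then g v else 0)
      = (if v = a then g v else 0) + (if v = b then g v else 0) := by
    intro v
    by_cases h1 : v = a
    · subst h1; simp [hab]
    · by_cases h2 : v = b
      · subst h2; simp [h1, Ne.symm hab]
      · simp [h1, h2]
  simp only [h, Finset.sum_add_distrib, Finset.sum_ite_eq', Finset.mem_univ, if_true]

/-- For a new node of `R_q(G)` attached to the edge `st` of `G` and an
old node `j`: `r̃_{ij} = 1/2 + (2r_{sj} + 2r_{tj} - r_{st})/(2(q+2))`. -/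
theorem resistance_qTriangulation_new_old {V : Type} [Fintype V] [DecidableEq V]
    (G : SimpleGraph V) (hG : G.Connected) (q : ℕ) (hq : 0 < q)
    (e : G.edgeSet) (k : Fin q) (s t : V) (he : (e : Sym2 V) = s(s, t)) (j : V) :
    resistance (qTriangulation G q) (Sum.inr (e, k)) (Sum.inl j)
      = 1 / 2 + (2 * resistance G s j + 2 * resistance G t j - resistance G s t)
          / (2 * ((q : ℝ) + 2)) := by
  classical
  have hst : G.Adj s t := G.mem_edgeSet.mp (he ▸ e.2)
  have hstne : s ≠ t := hst.ne
  have hq2 : ((q:ℝ) + 2) ≠ 0 := by positivity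
  set c : ℝ := 1 / ((q:ℝ) + 2) with hc
  set dd : V → ℝ := Pi.single s 1 + Pi.single t 1 - Pi.single j 2 with hdd
  have hddv : ∀ v, dd v = (if v = s then (1:ℝ) else 0) + (if v = t then 1 else 0)
      - 2 * (if v = j then 1 else 0) := by
    intro v
    simp only [hdd, Pi.add_apply, Pi.sub_apply, Pi.single_apply]
    split_ifs <;> ring
  have hddsum : ∑ v, dd v = 0 := by
    simp only [hddv, Finset.sum_sub_distrib, Finset.sum_add_distrib, ← Finset.mul_sum,
      Finset.sum_ite_eq', Finset.mem_univ, if_true]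
    ring
  set x : V → ℝ := c • (lapPinv G *ᵥ dd) with hx
  have hLx : G.lapMatrix ℝ *ᵥ x = c • dd := by
    rw [hx, Matrix.mulVec_smul, lap_mulVec_lapPinv_mulVec G hG dd hddsum]
  set h2 : Sym2 V → ℝ := Sym2.lift ⟨fun a b => x a + x b, fun a b => add_comm _ _⟩ with hh2
  set f : (V ⊕ (G.edgeSet × Fin q)) → ℝ :=
    Sum.elim x (fun p => h2 (p.1 : Sym2 V) / 2 + (if p = (e, k) then 1/2 else 0)) with hf
  have hAdjrr : ∀ p p' : G.edgeSet × Fin q,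
      (qTriangulation G q).Adj (Sum.inr p) (Sum.inr p') = False :=
    fun p p' => eq_false (qTri_adj_inr_inr G q p p')
  have hmain : (qTriangulation G q).lapMatrix ℝ *ᵥ f
      = Pi.single (Sum.inr (e,k)) 1 - Pi.single (Sum.inl j) 1 := by
    funext w
    rw [lap_mulVec_ite, Fintype.sum_sum_type]
    cases w with
    | inr p =>
      obtain ⟨e', k'⟩ := p
      obtain ⟨z, hz⟩ := e'
      revert hz
      refine Sym2.ind (fun a b => ?_) z
      intro hz
      have hab : G.Adj a b := G.mem_edgeSet.mp hz
      simp only [hAdjrr, if_false, Finset.sum_const_zero, add_zero]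
      have hcond : ∀ a' : V, (qTriangulation G q).Adj (Sum.inr (⟨s(a,b),hz⟩, k')) (Sum.inl a')
          ↔ (a' = a ∨ a' = b) := by
        intro a'
        rw [qTri_adj_inr_inl]
        exact Sym2.mem_iff
      simp only [hcond]
      rw [sum_ite_or hab.ne (fun a' => f (Sum.inr (⟨s(a,b),hz⟩, k')) - f (Sum.inl a'))]
      simp only [hf, Sum.elim_inl, Sum.elim_inr, Sym2.lift_mk, Pi.sub_apply, Pi.single_apply,
        Sum.inr.injEq, reduceCtorEq, if_false, sub_zero]
      rw [hh2]
      simp only [Sym2.lift_mk]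
      split_ifs <;> ring
    | inl v =>
      have hS1 : ∑ a, (if (qTriangulation G q).Adj (Sum.inl v) (Sum.inl a)
          then f (Sum.inl v) - f (Sum.inl a) else 0) = c * dd v := by
        have : ∀ a, ((qTriangulation G q).Adj (Sum.inl v) (Sum.inl a)
            ↔ G.Adj v a) := fun a => qTri_adj_inl_inl G q v a
        simp only [this, hf, Sum.elim_inl]
        rw [← lap_mulVec_ite G, hLx]
        simp
      have hsplit : ∀ p' : G.edgeSet × Fin q,
          (if (qTriangulation G q).Adj (Sum.inl v) (Sum.inr p')
            then f (Sum.inl v) - f (Sum.inr p') else 0)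
          = (if v ∈ (p'.1 : Sym2 V) then x v - h2 (p'.1 : Sym2 V) / 2 else 0)
            - (if p' = (e, k) then (if v ∈ ((e : G.edgeSet) : Sym2 V) then (1:ℝ)/2 else 0)
               else 0) := by
        intro p'
        rw [show ((qTriangulation G q).Adj (Sum.inl v) (Sum.inr p'))
            = (v ∈ (p'.1 : Sym2 V)) from rfl]
        by_cases h1 : v ∈ (p'.1 : Sym2 V) <;> by_cases h3 : p' = (e, k)
        · subst h3
          simp only [h1, if_true, hf, Sum.elim_inl, Sum.elim_inr]
          ring
        · simp only [h1, h3, if_true, if_false, hf, Sum.elim_inl, Sum.elim_inr]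
          ring
        · subst h3
          simp [h1]
        · simp [h1, h3]
      rw [Finset.sum_congr rfl (fun p' _ => hsplit p'), Finset.sum_sub_distrib]
      have hdelta : ∑ p' : G.edgeSet × Fin q, (if p' = (e, k)
          then (if v ∈ ((e : G.edgeSet) : Sym2 V) then (1:ℝ)/2 else 0) else 0)
          = (if v ∈ ((e : G.edgeSet) : Sym2 V) then (1:ℝ)/2 else 0) := by
        rw [Finset.sum_ite_eq' Finset.univ (e, k)
          (fun _ => (if v ∈ ((e : G.edgeSet) : Sym2 V) then (1:ℝ)/2 else 0))]
        simp
      have hApart : ∑ p' : G.edgeSet × Fin q,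
          (if v ∈ (p'.1 : Sym2 V) then x v - h2 (p'.1 : Sym2 V) / 2 else 0)
          = (q : ℝ) * ((c * dd v) / 2) := by
        rw [Fintype.sum_prod_type]
        have hinner : ∀ e' : G.edgeSet, ∑ _k' : Fin q,
            (if v ∈ (e' : Sym2 V) then x v - h2 (e' : Sym2 V) / 2 else 0)
            = (q : ℝ) * (if v ∈ (e' : Sym2 V) then x v - h2 (e' : Sym2 V) / 2 else 0) := by
          intro e'
          rw [Finset.sum_const, Finset.card_univ, Fintype.card_fin, nsmul_eq_mul]
        rw [Finset.sum_congr rfl (fun e' _ => hinner e'), ← Finset.mul_sum]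
        congr 1
        rw [sum_edges_mem G v (fun z => x v - h2 z / 2)]
        have : ∀ a : V, (if G.Adj v a then x v - h2 s(v, a) / 2 else 0)
            = (if G.Adj v a then x v - x a else 0) / 2 := by
          intro a
          rw [hh2]
          simp only [Sym2.lift_mk]
          split_ifs <;> ring
        rw [Finset.sum_congr rfl (fun a _ => this a), ← Finset.sum_div,
          ← lap_mulVec_ite G, hLx]
        simp
      rw [hdelta, hApart, hS1]
      have hmem : (if v ∈ ((e : G.edgeSet) : Sym2 V) then (1:ℝ)/2 else 0)
          = (if v = s then (1:ℝ) else 0)/2 + (if v = t then (1:ℝ) else 0)/2 := by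
        rw [he]
        simp only [Sym2.mem_iff]
        by_cases h1 : v = s
        · subst h1; simp [hstne]
        · by_cases h2 : v = t
          · subst h2; simp [h1]
          · simp [h1, h2]
      rw [hmem, hddv v]
      have hrhs : (Pi.single (Sum.inr (e,k)) 1 - Pi.single (Sum.inl j) 1 :
          (V ⊕ (G.edgeSet × Fin q)) → ℝ) (Sum.inl v) = -(if v = j then (1:ℝ) else 0) := by
        simp [Pi.single_apply]
      rw [hrhs, hc]
      generalize (if v = s then (1:ℝ) else 0) = Is
      generalize (if v = t then (1:ℝ) else 0) = It
      generalize (if v = j then (1:ℝ) else 0) = Ij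
      field_simp
      ring
  have hres := resistance_eq_of_potential (qTriangulation G q) (qTri_connected G q hG)
    (Sum.inr (e, k)) (Sum.inl j) f hmain
  rw [hres]
  have hfi : f (Sum.inr (e, k)) = (x s + x t) / 2 + 1/2 := by
    simp only [hf, Sum.elim_inr, eq_self_iff_true, if_true, hh2, he, Sym2.lift_mk]
  have hfj : f (Sum.inl j) = x j := rfl
  rw [hfi, hfj]
  -- bilinear algebra
  set aa : V → ℝ := Pi.single s 1 - Pi.single j 1 with haa
  set bb : V → ℝ := Pi.single t 1 - Pi.single j 1 with hbb
  have hBsymm : ∀ u w : V → ℝ, u ⬝ᵥ (lapPinv G *ᵥ w) = w ⬝ᵥ (lapPinv G *ᵥ u) := by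
    intro u w
    rw [Matrix.dotProduct_mulVec, ← lapPinv_transpose G, Matrix.vecMul_transpose,
      dotProduct_comm, lapPinv_transpose]
  have hdd' : dd = aa + bb := by
    funext v
    simp only [hdd, haa, hbb, Pi.add_apply, Pi.sub_apply, Pi.single_apply]
    split_ifs <;> ring
  have hst' : (Pi.single s 1 - Pi.single t 1 : V → ℝ) = aa - bb := by
    funext v
    simp only [haa, hbb, Pi.sub_apply]
    ring
  have hPsym : ∀ a b : V, lapPinv G a b = lapPinv G b a := by
    intro a b
    have h := congrFun (congrFun (lapPinv_transpose G) a) b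
    simpa [Matrix.transpose_apply] using h.symm
  have hentry : ∀ (a b : V) (cl cr : ℝ),
      Pi.single a cl ⬝ᵥ (lapPinv G *ᵥ Pi.single b cr) = cl * lapPinv G a b * cr := by
    intro a b cl cr
    rw [Matrix.mulVec_single, single_dotProduct]
    simp
    ring
  have hrES : ∀ a b : V, resistance G a b
      = lapPinv G a a - 2 * lapPinv G a b + lapPinv G b b := by
    intro a b
    rw [resistance]
    simp only [Matrix.mulVec_sub, dotProduct_sub, sub_dotProduct, hentry]
    rw [hPsym b a]
    ring
  have hkey : dd ⬝ᵥ (lapPinv G *ᵥ dd)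
      = 2 * resistance G s j + 2 * resistance G t j - resistance G s t := by
    rw [hrES s j, hrES t j, hrES s t]
    conv_lhs => rw [hdd]
    simp only [Matrix.mulVec_add, Matrix.mulVec_sub, dotProduct_add,
      dotProduct_sub, add_dotProduct, sub_dotProduct, hentry]
    rw [hPsym t s, hPsym j s, hPsym j t]
    ring
  have hxv : x s + x t - 2 * x j = c * (dd ⬝ᵥ (lapPinv G *ᵥ dd)) := by
    have hdot : dd ⬝ᵥ (lapPinv G *ᵥ dd)
        = (lapPinv G *ᵥ dd) s + (lapPinv G *ᵥ dd) t - 2 * (lapPinv G *ᵥ dd) j := by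
      conv_lhs => rw [hdd]
      rw [sub_dotProduct, add_dotProduct, single_dotProduct,
        single_dotProduct, single_dotProduct]
      ring
    rw [hdot]
    simp only [hx, Pi.smul_apply, smul_eq_mul]
    ring
  have hsplit2 : (x s + x t) / 2 + 1/2 - x j = 1/2 + (x s + x t - 2 * x j) / 2 := by ring
  have hq2' : (2:ℝ) + (q:ℝ) ≠ 0 := by positivity
  rw [hsplit2, hxv, hkey, hc]
  congr 1
  rw [div_mul_eq_mul_div, one_mul, div_div, mul_comm ((q:ℝ)+2) 2]
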